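/- arXiv:1308.3530 — 2 statements merged into one kernel-verified Lean document; each statement's English description precedes it below -/
import Mathlib

section
/- ε(K_{m+n} − K_{m,n}) − ε(K_{m+n}) = (1/4)mn(mn − 7m − 7n + 13) for m, n ≥ 1. -/
open Finset SimpleGraph

/-- A 4-cycle exists within the vertex set `s` of the graph `G`. -/
def fourCycleOn {V : Type*} (G : SimpleGraph V) (s : Set V) : Prop :=
  ∃ a b c d, a ∈ s ∧ b ∈ s ∧ c ∈ s ∧ d ∈ s ∧
    a ≠ b ∧ a ≠ c ∧ a ≠ d ∧ b ≠ c ∧ b ≠ d ∧ c ≠ d ∧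
    G.Adj a b ∧ G.Adj b c ∧ G.Adj c d ∧ G.Adj d a

/-- The pair of edges `{e,f}` spans an edge of the edge polytope: they share a
vertex, or they are disjoint and the induced subgraph on their endpoints has no 4-cycle. -/
def epPair {V : Type*} (G : SimpleGraph V) (e f : Sym2 V) : Prop :=
  (∃ v, v ∈ e ∧ v ∈ f) ∨
  ((¬ ∃ v, v ∈ e ∧ v ∈ f) ∧ ¬ fourCycleOn G {v | v ∈ e ∨ v ∈ f})

open scoped Classical in
/-- The number of edges (1-dimensional faces) of the edge polytope of `G`:
the number of unordered pairs of distinct edges satisfying `epPair`. -/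
noncomputable def epsilon {V : Type*} [Fintype V] (G : SimpleGraph V) : ℕ :=
  ((G.edgeFinset.powersetCard 2).filter
    (fun s => ∀ e ∈ s, ∀ f ∈ s, e ≠ f → epPair G e f)).card

open scoped Classical in
/-- number of 4-subsets inducing a path of length 3. -/
noncomputable def aCount {V : Type*} [Fintype V] (H : SimpleGraph V) : ℕ :=
  ((univ.powersetCard 4).filter (fun s => ∃ a b c d : V,
    s = {a, b, c, d} ∧ a ≠ b ∧ a ≠ c ∧ a ≠ d ∧ b ≠ c ∧ b ≠ d ∧ c ≠ d ∧
    H.Adj a b ∧ H.Adj b c ∧ H.Adj c d ∧ ¬H.Adj a c ∧ ¬H.Adj a d ∧ ¬H.Adj b d)).card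

open scoped Classical in
/-- number of 4-subsets inducing a cycle of length 4. -/
noncomputable def bCount {V : Type*} [Fintype V] (H : SimpleGraph V) : ℕ :=
  ((univ.powersetCard 4).filter (fun s => ∃ a b c d : V,
    s = {a, b, c, d} ∧ a ≠ b ∧ a ≠ c ∧ a ≠ d ∧ b ≠ c ∧ b ≠ d ∧ c ≠ d ∧
    H.Adj a b ∧ H.Adj b c ∧ H.Adj c d ∧ H.Adj d a ∧ ¬H.Adj a c ∧ ¬H.Adj b d)).card

open scoped Classical in
/-- number of 4-subsets inducing a path of length 2 plus an isolated vertex. -/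
noncomputable def cCount {V : Type*} [Fintype V] (H : SimpleGraph V) : ℕ :=
  ((univ.powersetCard 4).filter (fun s => ∃ a b c d : V,
    s = {a, b, c, d} ∧ a ≠ b ∧ a ≠ c ∧ a ≠ d ∧ b ≠ c ∧ b ≠ d ∧ c ≠ d ∧
    H.Adj a b ∧ H.Adj b c ∧ ¬H.Adj a c ∧ ¬H.Adj a d ∧ ¬H.Adj b d ∧ ¬H.Adj c d)).card

open scoped Classical in
/-- the number of triangles of `H`. -/
noncomputable def k3 {V : Type*} [Fintype V] (H : SimpleGraph V) : ℕ :=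
  ((univ.powersetCard 3).filter (fun s => ∀ i ∈ s, ∀ j ∈ s, i ≠ j → H.Adj i j)).card

open scoped Classical in
/-- the number of 3-subsets inducing a path with exactly two edges. -/
noncomputable def psi {V : Type*} [Fintype V] (H : SimpleGraph V) : ℕ :=
  ((univ.powersetCard 3).filter (fun s => ∃ a b c : V,
    s = {a, b, c} ∧ a ≠ b ∧ a ≠ c ∧ b ≠ c ∧ H.Adj a b ∧ H.Adj b c ∧ ¬H.Adj a c)).card

/-- the complete bipartite graph `K_{m,n}` on the vertex set `[d]`, with parts
`{0,…,m-1}` and `{m,…,m+n-1}`. -/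
def bip (d m n : ℕ) : SimpleGraph (Fin d) where
  Adj i j := ((i : ℕ) < m ∧ m ≤ (j : ℕ) ∧ (j : ℕ) < m + n) ∨
    ((j : ℕ) < m ∧ m ≤ (i : ℕ) ∧ (i : ℕ) < m + n)
  symm := by constructor; intro i j h; tauto
  loopless := by constructor; intro i h; omega

/-- the copy of `H` on the first `r` vertices of `[d]`. -/
def embedGraph {r : ℕ} (H : SimpleGraph (Fin r)) (d : ℕ) : SimpleGraph (Fin d) where
  Adj i j := ∃ (hi : (i : ℕ) < r) (hj : (j : ℕ) < r), H.Adj ⟨i, hi⟩ ⟨j, hj⟩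
  symm := by constructor; rintro i j ⟨hi, hj, h⟩; exact ⟨hj, hi, h.symm⟩
  loopless := by constructor; rintro i ⟨hi, hj, h⟩; exact H.loopless.irrefl _ h

/-- the subgraph of `H` consisting of the edges in the connected component `c`. -/
def compGraph {V : Type*} (H : SimpleGraph V) (c : H.ConnectedComponent) :
    SimpleGraph V where
  Adj i j := H.Adj i j ∧ H.connectedComponentMk i = c
  symm := by
    constructor
    rintro i j ⟨h, hc⟩
    exact ⟨h.symm, (SimpleGraph.ConnectedComponent.sound h.symm.reachable).trans hc⟩
  loopless := by constructor; rintro i ⟨h, _⟩; exact H.loopless.irrefl i h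

open scoped Classical in
/-- `|X_{i,j}|`: the number of vertices (other than `i, j`) adjacent to `i` but not `j`. -/
noncomputable def cardX {V : Type*} [Fintype V] (H : SimpleGraph V) (i j : V) : ℕ :=
  (univ.filter (fun ℓ => ℓ ≠ i ∧ ℓ ≠ j ∧ H.Adj i ℓ ∧ ¬ H.Adj j ℓ)).card


/-!
Two distinct edges either share a vertex, and then they always count, or they are disjoint.
So `ε(G)` is `∑ᵥ C(deg v, 2)` plus the number of disjoint pairs of edges whose four endpoints
carry no 4-cycle. If `G` is the disjoint union of the cliques on `S` and on `Sᶜ`, two disjoint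
edges on the same side span a `K₄`, which contains a 4-cycle, while two edges on opposite sides
span nothing but themselves. Hence `ε(K_a ⊔ K_b) = a C(a-1,2) + b C(b-1,2) + C(a,2) C(b,2)`,
the complete graph `K_d` is the case `b = 0`, and the theorem is the difference of the two values.
-/

theorem cast_mul_choose_two_sub_one (k : ℕ) :
    ((k * (k - 1).choose 2 : ℕ) : ℚ) = k * (k - 1) * (k - 2) / 2 := by
  cases k with
  | zero => simp
  | succ k => push_cast [Nat.add_sub_cancel, Nat.cast_choose_two]; ring

namespace SimpleGraph

open scoped Classical

variable {V : Type*} (G : SimpleGraph V)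

theorem epPair_comm {e f : Sym2 V} : epPair G e f ↔ epPair G f e := by
  simp only [epPair, and_comm, or_comm (a := _ ∈ e)]

theorem forall_pair_epPair_iff {e f : Sym2 V} (hef : e ≠ f) :
    (∀ x ∈ ({e, f} : Finset (Sym2 V)), ∀ y ∈ ({e, f} : Finset (Sym2 V)), x ≠ y → epPair G x y) ↔
      (∃ v, ∀ x ∈ ({e, f} : Finset (Sym2 V)), v ∈ x) ∨
        ((¬∃ v, ∀ x ∈ ({e, f} : Finset (Sym2 V)), v ∈ x) ∧
          ¬fourCycleOn G {v | ∃ x ∈ ({e, f} : Finset (Sym2 V)), v ∈ x}) := by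
  simp only [mem_insert, mem_singleton, forall_eq_or_imp, forall_eq, exists_eq_or_imp,
    exists_eq_left, ne_eq, not_true_eq_false, IsEmpty.forall_iff, true_and, and_true, hef,
    Ne.symm hef, not_false_eq_true, forall_const, ← epPair_comm G (e := e), and_self]
  rfl

theorem fourCycleOn_of_mem_sym2 {S : Finset V} (hS : G.IsClique (S : Set V)) {e f : Sym2 V}
    (he : e ∈ S.sym2) (hf : f ∈ S.sym2) (he' : ¬e.IsDiag) (hf' : ¬f.IsDiag)
    (hef : ¬∃ v, v ∈ e ∧ v ∈ f) : fourCycleOn G {v | v ∈ e ∨ v ∈ f} := by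
  induction e with | h a b
  induction f with | h c d
  rw [mk_mem_sym2_iff] at he hf
  simp only [Sym2.mk_isDiag_iff, Sym2.mem_iff] at he' hf' hef
  have hac : a ≠ c := fun h => hef ⟨a, by simp, by simp [h]⟩
  have had : a ≠ d := fun h => hef ⟨a, by simp, by simp [h]⟩
  have hbc : b ≠ c := fun h => hef ⟨b, by simp, by simp [h]⟩
  have hbd : b ≠ d := fun h => hef ⟨b, by simp, by simp [h]⟩
  exact ⟨a, b, c, d, by simp, by simp, by simp, by simp, he', hac, had, hbc, hbd, hf',
    hS he.1 he.2 he', hS he.2 hf.1 hbc, hS hf.1 hf.2 hf', hS hf.2 he.1 (Ne.symm had)⟩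

variable [Fintype V]

theorem card_edgePairs_with_common_vertex :
    #{s ∈ G.edgeFinset.powersetCard 2 | ∃ v, ∀ e ∈ s, v ∈ e} = ∑ v, (G.degree v).choose 2 := by
  have hunion : {s ∈ G.edgeFinset.powersetCard 2 | ∃ v, ∀ e ∈ s, v ∈ e}
      = univ.biUnion fun v => (G.incidenceFinset v).powersetCard 2 := by
    ext s
    simp only [mem_filter, mem_powersetCard, mem_biUnion, mem_univ, true_and,
      incidenceFinset_eq_filter, subset_iff]
    constructor
    · rintro ⟨⟨hE, hcard⟩, v, hv⟩
      exact ⟨v, fun e he => ⟨hE he, hv e he⟩, hcard⟩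
    · rintro ⟨v, hv, hcard⟩
      exact ⟨⟨fun e he => (hv he).1, hcard⟩, v, fun e he => (hv he).2⟩
  rw [hunion, card_biUnion]
  · simp [card_powersetCard, card_incidenceFinset_eq_degree]
  · intro v _ w _ hvw
    refine Finset.disjoint_left.mpr fun {s} hv hw => ?_
    rw [mem_powersetCard] at hv hw
    -- two distinct edges share at most one vertex
    have hsub : s ⊆ {s(v, w)} := fun e he => by
      simpa using G.incidenceSet_inter_incidenceSet_subset hvw
        (Set.mem_inter ((G.mem_incidenceFinset v e).mp (hv.1 he))
          ((G.mem_incidenceFinset w e).mp (hw.1 he)))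
    have := card_le_card hsub
    simp [hv.2] at this

theorem epsilon_eq_sum_choose_degree_add :
    epsilon G = ∑ v, (G.degree v).choose 2 +
      #{s ∈ G.edgeFinset.powersetCard 2 |
        (¬∃ v, ∀ e ∈ s, v ∈ e) ∧ ¬fourCycleOn G {v | ∃ e ∈ s, v ∈ e}} := by
  have hpair : ∀ s ∈ G.edgeFinset.powersetCard 2,
      (∀ e ∈ s, ∀ f ∈ s, e ≠ f → epPair G e f) ↔
        (∃ v, ∀ e ∈ s, v ∈ e) ∨
          ((¬∃ v, ∀ e ∈ s, v ∈ e) ∧ ¬fourCycleOn G {v | ∃ e ∈ s, v ∈ e}) := by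
    intro s hs
    obtain ⟨e, f, hef, rfl⟩ := card_eq_two.mp (mem_powersetCard.mp hs).2
    exact G.forall_pair_epPair_iff hef
  rw [epsilon, filter_congr hpair, filter_or, card_union_of_disjoint
    (disjoint_filter.mpr fun _ _ h₁ h₂ => h₂.1 h₁), card_edgePairs_with_common_vertex]

theorem card_edgeFinset_inter_sym2_of_isClique {S : Finset V} (hS : G.IsClique (S : Set V)) :
    #(G.edgeFinset ∩ S.sym2) = (#S).choose 2 := by
  have h := G.map_edgeFinset_induce (s := (S : Set V))
  simp only [Finset.toFinset_coe] at h
  rw [← h, card_map]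
  convert card_edgeFinset_top_eq_card_choose_two (V := (S : Set V)) using 3
  · exact induce_eq_top.mpr hS
  · simp

theorem disjoint_and_not_fourCycleOn_of_mem_sym2_of_mem_sym2_compl {S : Finset V}
    (hS : ∀ u v, G.Adj u v → (u ∈ S ↔ v ∈ S)) {e f : Sym2 V} (he : e ∈ S.sym2)
    (hf : f ∈ Sᶜ.sym2) :
    (¬∃ v, v ∈ e ∧ v ∈ f) ∧ ¬fourCycleOn G {v | v ∈ e ∨ v ∈ f} := by
  induction e with | h a b
  induction f with | h c d
  rw [mk_mem_sym2_iff] at he hf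
  simp only [mem_compl] at hf
  refine ⟨by grind, ?_⟩
  rintro ⟨p, q, r, -, hp, hq, hr, -, hpq, hpr, -, hqr, -, -, hadj_pq, hadj_qr, -, -⟩
  have hq' := hS _ _ hadj_pq
  have hr' := hS _ _ hadj_qr
  simp only [Set.mem_ofPred_eq, Sym2.mem_iff] at hp hq hr
  -- `p`, `q`, `r` are distinct and on one side, but each side holds only two endpoints
  grind

theorem notMem_sym2_compl_of_mem_sym2 {S : Finset V} {e : Sym2 V} (he : e ∈ S.sym2) :
    e ∉ Sᶜ.sym2 := by
  induction e with | h a b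
  simp_all

theorem injOn_pair_sym2_product_sym2_compl (S : Finset V) :
    Set.InjOn (fun x : Sym2 V × Sym2 V => ({x.1, x.2} : Finset (Sym2 V)))
      (S.sym2 ×ˢ Sᶜ.sym2 : Finset _) := by
  rintro ⟨e, f⟩ hef ⟨e', f'⟩ hef' h
  simp only [coe_product, Set.mem_prod, mem_coe] at hef hef'
  have he : e ∈ ({e', f'} : Finset _) := by simp [← show ({e, f} : Finset _) = {e', f'} from h]
  have hf : f ∈ ({e', f'} : Finset _) := by simp [← show ({e, f} : Finset _) = {e', f'} from h]
  simp only [mem_insert, mem_singleton] at he hf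
  have h₁ := notMem_sym2_compl_of_mem_sym2 hef.1
  have h₂ := notMem_sym2_compl_of_mem_sym2 hef'.1
  rcases he with rfl | rfl <;> rcases hf with rfl | rfl <;> simp_all

section TwoCliques

variable {S : Finset V} (hG : ∀ u v, G.Adj u v ↔ u ≠ v ∧ (u ∈ S ↔ v ∈ S))
include hG

theorem adj_iff_mem_compl_iff : ∀ u v, G.Adj u v ↔ u ≠ v ∧ (u ∈ Sᶜ ↔ v ∈ Sᶜ) := by
  simpa only [mem_compl, not_iff_not] using hG

omit [Fintype V] in
theorem isClique_of_adj_iff : G.IsClique (S : Set V) := fun u hu v hv huv =>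
  (hG u v).mpr ⟨huv, by simp_all⟩

theorem mem_sym2_or_mem_sym2_compl {e : Sym2 V} (he : e ∈ G.edgeSet) :
    e ∈ S.sym2 ∨ e ∈ Sᶜ.sym2 := by
  induction e with | h a b
  rw [mem_edgeSet, hG] at he
  simp only [mk_mem_sym2_iff, mem_compl]
  tauto

theorem disjoint_and_not_fourCycleOn_iff {e f : Sym2 V} (he : e ∈ G.edgeSet)
    (hf : f ∈ G.edgeSet) :
    ((¬∃ v, v ∈ e ∧ v ∈ f) ∧ ¬fourCycleOn G {v | v ∈ e ∨ v ∈ f}) ↔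
      (e ∈ S.sym2 ∧ f ∈ Sᶜ.sym2) ∨ (e ∈ Sᶜ.sym2 ∧ f ∈ S.sym2) := by
  have hG' := G.adj_iff_mem_compl_iff hG
  have he' := G.not_isDiag_of_mem_edgeSet he
  have hf' := G.not_isDiag_of_mem_edgeSet hf
  constructor
  · rintro ⟨hdisj, hcyc⟩
    rcases G.mem_sym2_or_mem_sym2_compl hG he with heS | heS <;>
      rcases G.mem_sym2_or_mem_sym2_compl hG hf with hfS | hfS
    · exact absurd (G.fourCycleOn_of_mem_sym2 (G.isClique_of_adj_iff hG) heS hfS he' hf' hdisj)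
        hcyc
    · exact .inl ⟨heS, hfS⟩
    · exact .inr ⟨heS, hfS⟩
    · exact absurd (G.fourCycleOn_of_mem_sym2 (G.isClique_of_adj_iff hG') heS hfS he' hf' hdisj)
        hcyc
  · rintro (⟨heS, hfS⟩ | ⟨heS, hfS⟩)
    · exact G.disjoint_and_not_fourCycleOn_of_mem_sym2_of_mem_sym2_compl
        (fun u v h => ((hG u v).mp h).2) heS hfS
    · exact G.disjoint_and_not_fourCycleOn_of_mem_sym2_of_mem_sym2_compl
        (fun u v h => ((hG' u v).mp h).2) heS (by rwa [compl_compl])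

theorem filter_disjoint_edgePairs_eq_image :
    {s ∈ G.edgeFinset.powersetCard 2 |
        (¬∃ v, ∀ e ∈ s, v ∈ e) ∧ ¬fourCycleOn G {v | ∃ e ∈ s, v ∈ e}}
      = ((G.edgeFinset ∩ S.sym2) ×ˢ (G.edgeFinset ∩ Sᶜ.sym2)).image fun x => {x.1, x.2} := by
  ext s
  simp only [mem_filter, mem_powersetCard, mem_image, mem_product, mem_inter, Prod.exists]
  constructor
  · rintro ⟨⟨hsub, hcard⟩, hpair⟩
    obtain ⟨e, f, -, rfl⟩ := card_eq_two.mp hcard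
    have he : e ∈ G.edgeFinset := hsub (mem_insert_self e {f})
    have hf : f ∈ G.edgeFinset := hsub (mem_insert_of_mem (mem_singleton_self f))
    rw [mem_edgeFinset] at he hf
    rcases (G.disjoint_and_not_fourCycleOn_iff hG he hf).mp (by simpa using hpair) with
      ⟨heS, hfS⟩ | ⟨heS, hfS⟩
    · exact ⟨e, f, ⟨⟨mem_edgeFinset.mpr he, heS⟩, mem_edgeFinset.mpr hf, hfS⟩, rfl⟩
    · exact ⟨f, e, ⟨⟨mem_edgeFinset.mpr hf, hfS⟩, mem_edgeFinset.mpr he, heS⟩, pair_comm f e⟩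
  · rintro ⟨e, f, ⟨⟨he, heS⟩, hf, hfS⟩, rfl⟩
    have hef : e ≠ f := fun h => notMem_sym2_compl_of_mem_sym2 heS (h ▸ hfS)
    refine ⟨⟨insert_subset he (singleton_subset_iff.mpr hf), card_pair hef⟩, ?_⟩
    rw [mem_edgeFinset] at he hf
    simpa using (G.disjoint_and_not_fourCycleOn_iff hG he hf).mpr (.inl ⟨heS, hfS⟩)

theorem card_disjoint_edgePairs_without_fourCycle :
    #{s ∈ G.edgeFinset.powersetCard 2 |
        (¬∃ v, ∀ e ∈ s, v ∈ e) ∧ ¬fourCycleOn G {v | ∃ e ∈ s, v ∈ e}}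
      = (#S).choose 2 * (#Sᶜ).choose 2 := by
  rw [G.filter_disjoint_edgePairs_eq_image hG, card_image_of_injOn, card_product,
    G.card_edgeFinset_inter_sym2_of_isClique (G.isClique_of_adj_iff hG),
    G.card_edgeFinset_inter_sym2_of_isClique (G.isClique_of_adj_iff (G.adj_iff_mem_compl_iff hG))]
  exact (injOn_pair_sym2_product_sym2_compl S).mono
    (by gcongr <;> exact inter_subset_right)

theorem degree_eq_of_adj_iff {v : V} (hv : v ∈ S) : G.degree v = #S - 1 := by
  have hnbr : G.neighborFinset v = S.erase v := by
    ext w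
    simp only [mem_neighborFinset, hG, mem_erase, hv, true_iff, ne_comm]
  rw [← card_neighborFinset_eq_degree, hnbr, card_erase_of_mem hv]

theorem sum_choose_degree_eq_of_adj_iff :
    ∑ v, (G.degree v).choose 2 = #S * (#S - 1).choose 2 + #Sᶜ * (#Sᶜ - 1).choose 2 := by
  rw [← sum_add_sum_compl S, sum_const_nat fun v hv => by rw [G.degree_eq_of_adj_iff hG hv],
    sum_const_nat fun v hv => by rw [G.degree_eq_of_adj_iff (G.adj_iff_mem_compl_iff hG) hv]]

theorem cast_epsilon_of_adj_iff :
    (epsilon G : ℚ) = #S * (#S - 1) * (#S - 2) / 2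
      + (Fintype.card V - #S) * (Fintype.card V - #S - 1) * (Fintype.card V - #S - 2) / 2
      + #S * (#S - 1) / 2 * ((Fintype.card V - #S) * (Fintype.card V - #S - 1) / 2) := by
  rw [epsilon_eq_sum_choose_degree_add, G.sum_choose_degree_eq_of_adj_iff hG,
    G.card_disjoint_edgePairs_without_fourCycle hG, Nat.cast_add, Nat.cast_add,
    cast_mul_choose_two_sub_one, cast_mul_choose_two_sub_one, Nat.cast_mul,
    Nat.cast_choose_two, Nat.cast_choose_two, card_compl, Nat.cast_sub (card_le_univ S)]

end TwoCliques

end SimpleGraph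

theorem sdiff_bip_adj_iff {m n : ℕ} (u v : Fin (m + n)) :
    ((⊤ : SimpleGraph (Fin (m + n))) \ bip (m + n) m n).Adj u v ↔
      u ≠ v ∧ (u ∈ ({w | (w : ℕ) < m} : Finset (Fin (m + n))) ↔
        v ∈ ({w | (w : ℕ) < m} : Finset (Fin (m + n)))) := by
  simp only [sdiff_adj, top_adj, bip, mem_filter, mem_univ, true_and]
  omega

open scoped Classical in
theorem epsilon_complete_minus_bipartite_at_m_add_n_general (m n : ℕ) :
    (epsilon ((⊤ : SimpleGraph (Fin (m + n))) \ bip (m + n) m n) : ℚ)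
      - (epsilon (⊤ : SimpleGraph (Fin (m + n))) : ℚ)
    = (1 / 4) * m * n * ((m : ℚ) * n - 7 * m - 7 * n + 13) := by
  have hcard : #({w | (w : ℕ) < m} : Finset (Fin (m + n))) = m := by
    simp [Fin.card_filter_val_lt]
  rw [SimpleGraph.cast_epsilon_of_adj_iff _ sdiff_bip_adj_iff,
    SimpleGraph.cast_epsilon_of_adj_iff (S := univ) _ (by simp), hcard, card_univ,
    Fintype.card_fin]
  push_cast
  ring

open scoped Classical in
theorem epsilon_complete_minus_bipartite_at_m_add_n (m n : ℕ) (hm : 1 ≤ m) (hn : 1 ≤ n) :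
    (epsilon ((⊤ : SimpleGraph (Fin (m + n))) \ bip (m + n) m n) : ℚ)
      - (epsilon (⊤ : SimpleGraph (Fin (m + n))) : ℚ)
    = (1 / 4) * m * n * ((m : ℚ) * n - 7 * m - 7 * n + 13) :=
  epsilon_complete_minus_bipartite_at_m_add_n_general m n
end

section
/- For 0 < p < 1, the function p ↦ p²(p² − 8p + 8)/64 attains its maximum on (0,1) at p = 3 − √5, where its value is (5√5 − 11)/8. -/
open Finset SimpleGraph

/-! With `f p = p ^ 2 * (p ^ 2 - 8 * p + 8) / 64`, `f' p = p * (p ^ 2 - 6 * p + 4) / 16`, so the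
interior critical point is the root `q = 3 - √5` of `p ^ 2 - 6 * p + 4`. Reducing modulo this
quadratic, `f q = (4 - 5 * q) / 8` and `f q - f p` factors as `(p - q) ^ 2` times a quadratic in `p`
that is positive on `[0, 1]`. -/

theorem sub_quartic_eq_sq_mul_of_critical {q : ℝ} (hq : q ^ 2 - 6 * q + 4 = 0) (p : ℝ) :
    (4 - 5 * q) / 8 - p ^ 2 * (p ^ 2 - 8 * p + 8) / 64
      = (p - q) ^ 2 * (-p ^ 2 + (8 - 2 * q) * p + 4 - 2 * q) / 64 := by
  linear_combination (-3 * p ^ 2 + 2 * q * p + 2 * q + 8) / 64 * hq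

theorem quartic_le_of_critical {q : ℝ} (hq : q ^ 2 - 6 * q + 4 = 0) (hq₂ : q < 2)
    {p : ℝ} (hp₀ : 0 ≤ p) (hp : p ≤ 8 - 2 * q) :
    p ^ 2 * (p ^ 2 - 8 * p + 8) / 64 ≤ (4 - 5 * q) / 8 := by
  have hcofactor : 0 ≤ -p ^ 2 + (8 - 2 * q) * p + 4 - 2 * q := by
    nlinarith [mul_nonneg hp₀ (sub_nonneg.2 hp)]
  rw [← sub_nonneg, sub_quartic_eq_sq_mul_of_critical hq]
  positivity

theorem quartic_eq_of_critical {q : ℝ} (hq : q ^ 2 - 6 * q + 4 = 0) :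
    q ^ 2 * (q ^ 2 - 8 * q + 8) / 64 = (4 - 5 * q) / 8 := by
  linarith [sub_quartic_eq_sq_mul_of_critical hq q]

theorem three_sub_sqrt_five_sq_sub : (3 - √5) ^ 2 - 6 * (3 - √5) + 4 = 0 := by
  linear_combination Real.sq_sqrt (show (0 : ℝ) ≤ 5 by norm_num)

theorem three_sub_sqrt_five_mem_Ioo : 3 - √5 ∈ Set.Ioo (0 : ℝ) 1 := by
  have h2 : 2 < √5 := (Real.lt_sqrt (by norm_num)).2 (by norm_num)
  have h3 : √5 < 3 := (Real.sqrt_lt' (by norm_num)).2 (by norm_num)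
  constructor <;> linarith

theorem max_of_random_coefficient :
    (∀ p ∈ Set.Ioo (0 : ℝ) 1,
      p ^ 2 * (p ^ 2 - 8 * p + 8) / 64 ≤ (5 * Real.sqrt 5 - 11) / 8)
    ∧ (3 - Real.sqrt 5) ∈ Set.Ioo (0 : ℝ) 1
    ∧ (3 - Real.sqrt 5) ^ 2 * ((3 - Real.sqrt 5) ^ 2 - 8 * (3 - Real.sqrt 5) + 8) / 64
        = (5 * Real.sqrt 5 - 11) / 8 := by
  obtain ⟨hq₀, hq₁⟩ := three_sub_sqrt_five_mem_Ioo
  have hvalue : (4 - 5 * (3 - √5)) / 8 = (5 * √5 - 11) / 8 := by ring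
  refine ⟨fun p ⟨hp₀, hp₁⟩ => ?_, ⟨hq₀, hq₁⟩, ?_⟩
  · rw [← hvalue]
    exact quartic_le_of_critical three_sub_sqrt_five_sq_sub (by linarith) hp₀.le (by linarith)
  · rw [← hvalue]
    exact quartic_eq_of_critical three_sub_sqrt_five_sq_sub
end
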